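/- arXiv:2412.16820 — 2 statements merged into one kernel-verified Lean document; each statement's English description precedes it below -/
import Mathlib

section
/- In the Weyl group of type A_r, for each of the elements w ∈ {s_2s_1, s_1s_2, s_{r-1}s_r, s_r s_{r-1}} and, for 2 ≤ i ≤ r-1, w ∈ {s_{i-1}s_i s_{i+1}, s_i s_{i-1} s_{i+1}, s_{i+1} s_i s_{i-1}}, the vector w(α̃ + ρ) + α̃ - ρ has a strictly negative coefficient on some simple root when expanded in the simple-root basis; hence w ∉ A(α̃, -α̃). -/
open Finset

noncomputable section

/-- The standard basis vector `e_i` of `ℝ^{r+1}`, with coordinates indexed `1, …, r+1`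
(the coordinate `j : Fin (r+1)` has 1-based index `(j : ℕ) + 1`). -/
def stdVec (r i : ℕ) : Fin (r + 1) → ℝ := fun j => if (j : ℕ) + 1 = i then 1 else 0

/-- The simple root `α_i = e_i - e_{i+1}` of the type `A_r` root system, `1 ≤ i ≤ r`. -/
def simpleRoot (r i : ℕ) : Fin (r + 1) → ℝ := stdVec r i - stdVec r (i + 1)

/-- The standard inner product on `ℝ^{r+1}`. -/
def ip (r : ℕ) (v w : Fin (r + 1) → ℝ) : ℝ := ∑ j, v j * w j

/-- The simple reflection `s_i(v) = v - (2(α_i, v)/(α_i, α_i)) α_i`. -/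
def sref (r i : ℕ) (v : Fin (r + 1) → ℝ) : Fin (r + 1) → ℝ :=
  v - (2 * ip r (simpleRoot r i) v / ip r (simpleRoot r i) (simpleRoot r i)) • simpleRoot r i

/-- The highest root `α̃ = α_1 + ⋯ + α_r` of type `A_r`. -/
def highestRoot (r : ℕ) : Fin (r + 1) → ℝ := ∑ i ∈ Finset.Icc 1 r, simpleRoot r i

/-- The positive root `α_{i,j} = α_i + α_{i+1} + ⋯ + α_j` of type `A_r`, `1 ≤ i ≤ j ≤ r`. -/
def posRoot (r i j : ℕ) : Fin (r + 1) → ℝ := ∑ k ∈ Finset.Icc i j, simpleRoot r k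

/-- `ρ`, half the sum of the positive roots of type `A_r`. -/
def rho (r : ℕ) : Fin (r + 1) → ℝ :=
  (1 / 2 : ℝ) • ∑ p ∈ (Finset.Icc 1 r ×ˢ Finset.Icc 1 r).filter (fun p => p.1 ≤ p.2),
    posRoot r p.1 p.2

end

noncomputable section

/-- Apply a word in the simple reflections (read left to right, so the rightmost letter
acts first) to a vector. -/
def wordApply (r : ℕ) (l : List ℕ) (v : Fin (r + 1) → ℝ) : Fin (r + 1) → ℝ :=
  l.foldr (sref r) v

/-- The vector `σ(α̃ + ρ) - (-α̃) - ρ = σ(α̃ + ρ) + α̃ - ρ`, for `σ` the product of the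
word `l` of simple reflections; `σ ∈ A(α̃, -α̃)` iff this is a nonnegative integer
combination of positive roots. -/
def altVec (r : ℕ) (l : List ℕ) : Fin (r + 1) → ℝ :=
  wordApply r l (highestRoot r + rho r) + highestRoot r - rho r

/-- `v` is a nonnegative integer combination of the positive roots of type `A_r`. -/
def IsNNPosComb (r : ℕ) (v : Fin (r + 1) → ℝ) : Prop :=
  ∃ c : ℕ × ℕ → ℕ,
    v = ∑ p ∈ (Finset.Icc 1 r ×ˢ Finset.Icc 1 r).filter (fun p => p.1 ≤ p.2),
      (c p : ℝ) • posRoot r p.1 p.2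

/-- `v` is a nonnegative integer combination of the simple roots of type `A_r`. -/
def IsNNSimpleComb (r : ℕ) (v : Fin (r + 1) → ℝ) : Prop :=
  ∃ c : ℕ → ℕ, v = ∑ i ∈ Finset.Icc 1 r, (c i : ℝ) • simpleRoot r i

end

/-- `v`, expanded in the simple-root basis of type `A_r`, has a strictly negative
coefficient on some simple root. -/
def HasNegSimpleCoeff (r : ℕ) (v : Fin (r + 1) → ℝ) : Prop :=
  ∃ c : ℕ → ℝ, v = ∑ i ∈ Finset.Icc 1 r, c i • simpleRoot r i ∧
    ∃ i ∈ Finset.Icc 1 r, c i < 0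

section MyLemmas

lemma sum_if_coord (r m : ℕ) (c : ℝ) :
    ∑ k : Fin (r+1), (if (k:ℕ) = m then c else 0) = if m < r + 1 then c else 0 := by
  by_cases h : m < r + 1
  · rw [if_pos h, Finset.sum_eq_single (⟨m, h⟩ : Fin (r+1))]
    · simp
    · intro b _ hb; rw [if_neg]; simpa [Fin.ext_iff] using hb
    · simp
  · rw [if_neg h]
    apply Finset.sum_eq_zero
    intro k _
    have := k.isLt
    rw [if_neg]; omega

lemma ip_stdVec (r a b : ℕ) (ha1 : 1 ≤ a) (ha2 : a ≤ r + 1) :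
    ip r (stdVec r a) (stdVec r b) = if a = b then 1 else 0 := by
  unfold ip stdVec
  have h : ∀ k : Fin (r+1),
      (if (k:ℕ)+1 = a then (1:ℝ) else 0) * (if (k:ℕ)+1 = b then 1 else 0)
      = if (k:ℕ) = a - 1 then (if a = b then (1:ℝ) else 0) else 0 := by
    intro k
    split_ifs <;> first | omega | (exfalso; omega) | norm_num
  simp only [h, sum_if_coord]
  rw [if_pos (by omega)]

lemma ip_sub_right (r : ℕ) (u v w : Fin (r+1) → ℝ) :
    ip r u (v - w) = ip r u v - ip r u w := by
  simp [ip, mul_sub, Finset.sum_sub_distrib]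

lemma ip_add_right (r : ℕ) (u v w : Fin (r+1) → ℝ) :
    ip r u (v + w) = ip r u v + ip r u w := by
  simp [ip, mul_add, Finset.sum_add_distrib]

lemma ip_smul_right (r : ℕ) (u v : Fin (r+1) → ℝ) (c : ℝ) :
    ip r u (c • v) = c * ip r u v := by
  simp only [ip, Pi.smul_apply, smul_eq_mul, Finset.mul_sum]
  exact Finset.sum_congr rfl fun j _ => by ring

lemma ip_sub_left (r : ℕ) (u v w : Fin (r+1) → ℝ) :
    ip r (u - v) w = ip r u w - ip r v w := by
  simp [ip, sub_mul, Finset.sum_sub_distrib]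

lemma ip_sum_right {ι : Type*} (r : ℕ) (u : Fin (r+1) → ℝ) (s : Finset ι)
    (f : ι → Fin (r+1) → ℝ) :
    ip r u (∑ x ∈ s, f x) = ∑ x ∈ s, ip r u (f x) := by
  simp only [ip, Finset.sum_apply, Finset.mul_sum]
  exact Finset.sum_comm

lemma ip_ss (r j b : ℕ) (hj1 : 1 ≤ j) (hj2 : j ≤ r) (hb1 : 1 ≤ b) (hb2 : b ≤ r) :
    ip r (simpleRoot r j) (simpleRoot r b)
      = (if j = b then 2 else 0) - (if b = j + 1 then 1 else 0)
        - (if j = b + 1 then 1 else 0) := by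
  unfold simpleRoot
  rw [ip_sub_left, ip_sub_right, ip_sub_right,
    ip_stdVec r j b hj1 (by omega), ip_stdVec r j (b+1) hj1 (by omega),
    ip_stdVec r (j+1) b (by omega) (by omega), ip_stdVec r (j+1) (b+1) (by omega) (by omega)]
  simp only [show (j + 1 = b + 1) ↔ (j = b) from by omega,
    show (j + 1 = b) ↔ (b = j + 1) from by omega]
  split_ifs <;> first | omega | (exfalso; omega) | norm_num

end MyLemmas

section MyLemmas2

lemma count_pairs (r m : ℕ) :
    (((Finset.Icc 1 r ×ˢ Finset.Icc 1 r).filter (fun p => p.1 ≤ p.2)).filter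
        (fun p => p.1 ≤ m ∧ m ≤ p.2)).card = m * (r + 1 - m) := by
  rw [Finset.filter_filter]
  have h : ((Finset.Icc 1 r ×ˢ Finset.Icc 1 r).filter
        (fun p => p.1 ≤ p.2 ∧ p.1 ≤ m ∧ m ≤ p.2))
      = Finset.Icc 1 m ×ˢ Finset.Icc m r := by
    ext p
    simp only [Finset.mem_filter, Finset.mem_product, Finset.mem_Icc]
    omega
  rw [h, Finset.card_product, Nat.card_Icc, Nat.card_Icc]
  have : m + 1 - 1 = m := by omega
  rw [this]

lemma ip_pos (r j p1 p2 : ℕ) (hj1 : 1 ≤ j) (hj2 : j ≤ r) (hp1 : 1 ≤ p1) (hp2 : p2 ≤ r) :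
    ip r (simpleRoot r j) (posRoot r p1 p2)
      = (if p1 ≤ j ∧ j ≤ p2 then 2 else 0) - (if p1 ≤ j + 1 ∧ j + 1 ≤ p2 then 1 else 0)
        - (if p1 ≤ j - 1 ∧ j - 1 ≤ p2 then 1 else 0) := by
  unfold posRoot
  rw [ip_sum_right]
  have h : ∀ m ∈ Finset.Icc p1 p2,
      ip r (simpleRoot r j) (simpleRoot r m)
      = (if j = m then (2:ℝ) else 0) - (if m = j + 1 then 1 else 0)
        - (if m = j - 1 then 1 else 0) := by
    intro m hm
    simp only [Finset.mem_Icc] at hm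
    rw [ip_ss r j m hj1 hj2 (by omega) (by omega)]
    simp only [show (j = m + 1) ↔ (m = j - 1) from by omega]
  rw [Finset.sum_congr rfl h, Finset.sum_sub_distrib, Finset.sum_sub_distrib,
    Finset.sum_ite_eq, Finset.sum_ite_eq', Finset.sum_ite_eq']
  simp only [Finset.mem_Icc]

lemma ip_rho (r j : ℕ) (hj1 : 1 ≤ j) (hj2 : j ≤ r) :
    ip r (simpleRoot r j) (rho r) = 1 := by
  unfold rho
  rw [ip_smul_right, ip_sum_right]
  have h : ∀ p ∈ (Finset.Icc 1 r ×ˢ Finset.Icc 1 r).filter (fun p => p.1 ≤ p.2),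
      ip r (simpleRoot r j) (posRoot r p.1 p.2)
      = 2 * (if p.1 ≤ j ∧ j ≤ p.2 then (1:ℝ) else 0)
        - (if p.1 ≤ j + 1 ∧ j + 1 ≤ p.2 then 1 else 0)
        - (if p.1 ≤ j - 1 ∧ j - 1 ≤ p.2 then 1 else 0) := by
    intro p hp
    simp only [Finset.mem_filter, Finset.mem_product, Finset.mem_Icc] at hp
    rw [ip_pos r j p.1 p.2 hj1 hj2 hp.1.1.1 hp.1.2.2]
    split_ifs <;> norm_num
  rw [Finset.sum_congr rfl h, Finset.sum_sub_distrib, Finset.sum_sub_distrib,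
    ← Finset.mul_sum, Finset.sum_boole, Finset.sum_boole, Finset.sum_boole,
    count_pairs, count_pairs, count_pairs]
  obtain ⟨j', rfl⟩ : ∃ j', j = j' + 1 := ⟨j - 1, by omega⟩
  obtain ⟨q, rfl⟩ : ∃ q, r = j' + 1 + q := ⟨r - (j' + 1), by omega⟩
  simp only [show j' + 1 + q + 1 - (j' + 1) = q + 1 from by omega,
    show j' + 1 + q + 1 - (j' + 1 + 1) = q from by omega,
    show j' + 1 - 1 = j' from by omega,
    show j' + 1 + q + 1 - j' = q + 2 from by omega]
  push_cast
  ring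

lemma highestRoot_eq_posRoot (r : ℕ) : highestRoot r = posRoot r 1 r := rfl

lemma ipv (r j : ℕ) (hj1 : 1 ≤ j) (hj2 : j ≤ r) :
    ip r (simpleRoot r j) (highestRoot r + rho r)
      = 3 - (if j + 1 ≤ r then 1 else 0) - (if 2 ≤ j then 1 else 0) := by
  rw [ip_add_right, ip_rho r j hj1 hj2, highestRoot_eq_posRoot,
    ip_pos r j 1 r hj1 hj2 le_rfl le_rfl]
  simp only [show (1 ≤ j ∧ j ≤ r) ↔ True from by simp [hj1, hj2],
    show (1 ≤ j + 1 ∧ j + 1 ≤ r) ↔ (j + 1 ≤ r) from by omega,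
    show (1 ≤ j - 1 ∧ j - 1 ≤ r) ↔ (2 ≤ j) from by omega, if_true]
  ring

lemma sref_eq (r j : ℕ) (hj1 : 1 ≤ j) (hj2 : j ≤ r) (u : Fin (r+1) → ℝ) :
    sref r j u = u - ip r (simpleRoot r j) u • simpleRoot r j := by
  unfold sref
  have h2 : ip r (simpleRoot r j) (simpleRoot r j) = 2 := by
    rw [ip_ss r j j hj1 hj2 hj1 hj2]
    split_ifs <;> first | omega | (exfalso; omega) | norm_num
  rw [h2]
  have : 2 * ip r (simpleRoot r j) u / 2 = ip r (simpleRoot r j) u := by ring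
  rw [this]

end MyLemmas2

section MyLemmas3

noncomputable def scoeff (r i : ℕ) (v : Fin (r+1) → ℝ) : ℝ :=
  ∑ k ∈ Finset.univ.filter (fun k : Fin (r+1) => (k:ℕ) < i), v k

lemma scoeff_sum {ι : Type*} (r i : ℕ) (s : Finset ι) (f : ι → Fin (r+1) → ℝ) :
    scoeff r i (∑ x ∈ s, f x) = ∑ x ∈ s, scoeff r i (f x) := by
  unfold scoeff
  simp only [Finset.sum_apply]
  exact Finset.sum_comm

lemma scoeff_smul (r i : ℕ) (c : ℝ) (v : Fin (r+1) → ℝ) :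
    scoeff r i (c • v) = c * scoeff r i v := by
  unfold scoeff
  simp [Finset.mul_sum]

lemma sum_if_coord' (r m : ℕ) (P : Prop) [Decidable P] (c : ℝ) :
    ∑ k : Fin (r+1), (if ((k:ℕ) = m ∧ P) then c else 0)
      = if (m < r + 1 ∧ P) then c else 0 := by
  by_cases hP : P
  · simp only [hP, and_true, sum_if_coord]
  · simp [hP]

lemma scoeff_simpleRoot (r i j : ℕ) (hj1 : 1 ≤ j) (hj2 : j ≤ r) :
    scoeff r i (simpleRoot r j) = if i = j then 1 else 0 := by
  unfold scoeff simpleRoot stdVec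
  rw [Finset.sum_filter]
  have h : ∀ k : Fin (r+1),
      (if (k:ℕ) < i then
        ((if (k:ℕ) + 1 = j then (1:ℝ) else 0) - (if (k:ℕ) + 1 = j + 1 then 1 else 0))
      else 0)
      = (if ((k:ℕ) = j - 1 ∧ j ≤ i) then (1:ℝ) else 0)
        - (if ((k:ℕ) = j ∧ j + 1 ≤ i) then 1 else 0) := by
    intro k
    split_ifs <;> first | omega | (exfalso; omega) | norm_num
  simp only [Pi.sub_apply]
  rw [Finset.sum_congr rfl (fun k _ => h k), Finset.sum_sub_distrib,
    sum_if_coord', sum_if_coord']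
  split_ifs <;> first | omega | (exfalso; omega) | norm_num

lemma scoeff_posRoot_nonneg (r i p1 p2 : ℕ) (hp1 : 1 ≤ p1) (hp2 : p2 ≤ r) :
    0 ≤ scoeff r i (posRoot r p1 p2) := by
  unfold posRoot
  rw [scoeff_sum]
  apply Finset.sum_nonneg
  intro m hm
  simp only [Finset.mem_Icc] at hm
  rw [scoeff_simpleRoot r i m (by omega) (by omega)]
  split_ifs <;> norm_num

lemma master (r : ℕ) (v : Fin (r+1) → ℝ) (c : ℕ → ℝ)
    (hv : v = ∑ i ∈ Finset.Icc 1 r, c i • simpleRoot r i)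
    (i0 : ℕ) (hi0 : i0 ∈ Finset.Icc 1 r) (hneg : c i0 < 0) :
    HasNegSimpleCoeff r v ∧ ¬ IsNNPosComb r v := by
  constructor
  · exact ⟨c, hv, i0, hi0, hneg⟩
  · rintro ⟨c', hc'⟩
    have h1 : scoeff r i0 v = c i0 := by
      rw [hv, scoeff_sum]
      have h : ∀ j ∈ Finset.Icc 1 r,
          scoeff r i0 (c j • simpleRoot r j) = if i0 = j then c j else 0 := by
        intro j hj
        simp only [Finset.mem_Icc] at hj
        rw [scoeff_smul, scoeff_simpleRoot r i0 j hj.1 hj.2]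
        split_ifs <;> ring
      rw [Finset.sum_congr rfl h, Finset.sum_ite_eq, if_pos hi0]
    have h2 : 0 ≤ scoeff r i0 v := by
      rw [hc', scoeff_sum]
      apply Finset.sum_nonneg
      intro p hp
      simp only [Finset.mem_filter, Finset.mem_product, Finset.mem_Icc] at hp
      rw [scoeff_smul]
      exact mul_nonneg (Nat.cast_nonneg _)
        (scoeff_posRoot_nonneg r i0 p.1 p.2 hp.1.1.1 hp.1.2.2)
    linarith

end MyLemmas3

section MyLemmas4

lemma comb_smul_sum (r : ℕ) (a : ℕ) (ha : a ∈ Finset.Icc 1 r) (x : ℝ) :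
    ∑ i ∈ Finset.Icc 1 r, (if i = a then x else 0) • simpleRoot r i
      = x • simpleRoot r a := by
  simp only [ite_smul, zero_smul]
  rw [Finset.sum_ite_eq', if_pos ha]

lemma altVec_two (r a b : ℕ) (ha1 : 1 ≤ a) (ha2 : a ≤ r) (hb1 : 1 ≤ b) (hb2 : b ≤ r)
    (xa xb : ℝ)
    (hxb : xb = ip r (simpleRoot r b) (highestRoot r + rho r))
    (hxa : xa = ip r (simpleRoot r a) (highestRoot r + rho r)
        - xb * ip r (simpleRoot r a) (simpleRoot r b)) :
    altVec r [a, b]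
      = ∑ i ∈ Finset.Icc 1 r,
          ((2:ℝ) - (if i = b then xb else 0) - (if i = a then xa else 0))
            • simpleRoot r i := by
  have e1 : wordApply r [a, b] (highestRoot r + rho r)
      = (highestRoot r + rho r) - xb • simpleRoot r b - xa • simpleRoot r a := by
    show sref r a (sref r b (highestRoot r + rho r)) = _
    rw [sref_eq r b hb1 hb2, ← hxb, sref_eq r a ha1 ha2, ip_sub_right, ip_smul_right,
      ← hxa]
  unfold altVec
  rw [e1]
  simp only [sub_smul]
  rw [Finset.sum_sub_distrib, Finset.sum_sub_distrib,
    comb_smul_sum r b (by simp only [Finset.mem_Icc]; omega) xb,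
    comb_smul_sum r a (by simp only [Finset.mem_Icc]; omega) xa,
    ← Finset.smul_sum,
    show (2:ℝ) • ∑ i ∈ Finset.Icc 1 r, simpleRoot r i = (2:ℝ) • highestRoot r from rfl]
  funext k
  simp only [Pi.add_apply, Pi.sub_apply, Pi.smul_apply, smul_eq_mul]
  ring

lemma altVec_three (r a b c : ℕ) (ha1 : 1 ≤ a) (ha2 : a ≤ r) (hb1 : 1 ≤ b) (hb2 : b ≤ r)
    (hc1 : 1 ≤ c) (hc2 : c ≤ r)
    (xa xb xc : ℝ)
    (hxc : xc = ip r (simpleRoot r c) (highestRoot r + rho r))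
    (hxb : xb = ip r (simpleRoot r b) (highestRoot r + rho r)
        - xc * ip r (simpleRoot r b) (simpleRoot r c))
    (hxa : xa = ip r (simpleRoot r a) (highestRoot r + rho r)
        - xc * ip r (simpleRoot r a) (simpleRoot r c)
        - xb * ip r (simpleRoot r a) (simpleRoot r b)) :
    altVec r [a, b, c]
      = ∑ i ∈ Finset.Icc 1 r,
          ((2:ℝ) - (if i = c then xc else 0) - (if i = b then xb else 0)
            - (if i = a then xa else 0)) • simpleRoot r i := by
  have e1 : wordApply r [a, b, c] (highestRoot r + rho r)
      = (highestRoot r + rho r) - xc • simpleRoot r c - xb • simpleRoot r b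
        - xa • simpleRoot r a := by
    show sref r a (sref r b (sref r c (highestRoot r + rho r))) = _
    rw [sref_eq r c hc1 hc2, ← hxc, sref_eq r b hb1 hb2, ip_sub_right, ip_smul_right,
      ← hxb, sref_eq r a ha1 ha2, ip_sub_right, ip_sub_right, ip_smul_right,
      ip_smul_right, ← hxa]
  unfold altVec
  rw [e1]
  simp only [sub_smul]
  rw [Finset.sum_sub_distrib, Finset.sum_sub_distrib, Finset.sum_sub_distrib,
    comb_smul_sum r c (by simp only [Finset.mem_Icc]; omega) xc,
    comb_smul_sum r b (by simp only [Finset.mem_Icc]; omega) xb,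
    comb_smul_sum r a (by simp only [Finset.mem_Icc]; omega) xa,
    ← Finset.smul_sum,
    show (2:ℝ) • ∑ i ∈ Finset.Icc 1 r, simpleRoot r i = (2:ℝ) • highestRoot r from rfl]
  funext k
  simp only [Pi.add_apply, Pi.sub_apply, Pi.smul_apply, smul_eq_mul]
  ring

end MyLemmas4


section MyCases

lemma case_two (r a b : ℕ) (hr : 2 ≤ r) (ha1 : 1 ≤ a) (ha2 : a ≤ r)
    (hb1 : 1 ≤ b) (hb2 : b ≤ r) (hadj : b + 1 = a ∨ a + 1 = b)
    (hbound : a = 1 ∨ b = 1 ∨ a = r ∨ b = r) :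
    HasNegSimpleCoeff r (altVec r [a, b]) ∧ ¬ IsNNPosComb r (altVec r [a, b]) := by
  set xb : ℝ := ip r (simpleRoot r b) (highestRoot r + rho r) with hxb
  set xa : ℝ := ip r (simpleRoot r a) (highestRoot r + rho r)
      - xb * ip r (simpleRoot r a) (simpleRoot r b) with hxa
  have hrep := altVec_two r a b ha1 ha2 hb1 hb2 xa xb hxb hxa
  have eG : ip r (simpleRoot r a) (simpleRoot r b) = -1 := by
    rw [ip_ss r a b ha1 ha2 hb1 hb2]
    split_ifs <;> first | (exfalso; omega) | norm_num
  have exa : 3 ≤ xa := by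
    rw [hxa, hxb, eG, ipv r a ha1 ha2, ipv r b hb1 hb2]
    simp only [mul_neg_one, sub_neg_eq_add]
    split_ifs <;> first | (exfalso; omega) | norm_num
  refine master r _
    (fun i => (2:ℝ) - (if i = b then xb else 0) - (if i = a then xa else 0)) hrep
    a (by simp only [Finset.mem_Icc]; omega) ?_
  show (2:ℝ) - (if a = b then xb else 0) - (if a = a then xa else 0) < 0
  rw [if_neg (by omega : ¬ a = b), if_pos rfl]
  linarith

lemma case_threeA (r i : ℕ) (h2i : 2 ≤ i) (hir : i ≤ r - 1) (hr : 2 ≤ r) :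
    HasNegSimpleCoeff r (altVec r [i - 1, i, i + 1])
      ∧ ¬ IsNNPosComb r (altVec r [i - 1, i, i + 1]) := by
  have hr3 : 3 ≤ r := by omega
  set xc : ℝ := ip r (simpleRoot r (i+1)) (highestRoot r + rho r) with hxc
  set xb : ℝ := ip r (simpleRoot r i) (highestRoot r + rho r)
      - xc * ip r (simpleRoot r i) (simpleRoot r (i+1)) with hxb
  set xa : ℝ := ip r (simpleRoot r (i-1)) (highestRoot r + rho r)
      - xc * ip r (simpleRoot r (i-1)) (simpleRoot r (i+1))
      - xb * ip r (simpleRoot r (i-1)) (simpleRoot r i) with hxa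
  have hrep := altVec_three r (i-1) i (i+1) (by omega) (by omega) (by omega) (by omega)
    (by omega) (by omega) xa xb xc hxc hxb hxa
  have eG1 : ip r (simpleRoot r i) (simpleRoot r (i+1)) = -1 := by
    rw [ip_ss r i (i+1) (by omega) (by omega) (by omega) (by omega)]
    split_ifs <;> first | (exfalso; omega) | norm_num
  have eG2 : ip r (simpleRoot r (i-1)) (simpleRoot r (i+1)) = 0 := by
    rw [ip_ss r (i-1) (i+1) (by omega) (by omega) (by omega) (by omega)]
    split_ifs <;> first | (exfalso; omega) | norm_num
  have eG3 : ip r (simpleRoot r (i-1)) (simpleRoot r i) = -1 := by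
    rw [ip_ss r (i-1) i (by omega) (by omega) (by omega) (by omega)]
    split_ifs <;> first | (exfalso; omega) | norm_num
  have exa : 3 ≤ xa := by
    rw [hxa, hxb, hxc, eG1, eG2, eG3, ipv r (i-1) (by omega) (by omega),
      ipv r i (by omega) (by omega), ipv r (i+1) (by omega) (by omega)]
    simp only [mul_neg_one, mul_zero, sub_zero, sub_neg_eq_add]
    split_ifs <;> first | (exfalso; omega) | norm_num
  refine master r _
    (fun j => (2:ℝ) - (if j = i + 1 then xc else 0) - (if j = i then xb else 0)
      - (if j = i - 1 then xa else 0)) hrep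
    (i - 1) (by simp only [Finset.mem_Icc]; omega) ?_
  show (2:ℝ) - (if i - 1 = i + 1 then xc else 0) - (if i - 1 = i then xb else 0)
      - (if i - 1 = i - 1 then xa else 0) < 0
  rw [if_neg (by omega : ¬ i - 1 = i + 1), if_neg (by omega : ¬ i - 1 = i), if_pos rfl]
  linarith

lemma case_threeB (r i : ℕ) (h2i : 2 ≤ i) (hir : i ≤ r - 1) (hr : 2 ≤ r) :
    HasNegSimpleCoeff r (altVec r [i, i - 1, i + 1])
      ∧ ¬ IsNNPosComb r (altVec r [i, i - 1, i + 1]) := by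
  have hr3 : 3 ≤ r := by omega
  set xc : ℝ := ip r (simpleRoot r (i+1)) (highestRoot r + rho r) with hxc
  set xb : ℝ := ip r (simpleRoot r (i-1)) (highestRoot r + rho r)
      - xc * ip r (simpleRoot r (i-1)) (simpleRoot r (i+1)) with hxb
  set xa : ℝ := ip r (simpleRoot r i) (highestRoot r + rho r)
      - xc * ip r (simpleRoot r i) (simpleRoot r (i+1))
      - xb * ip r (simpleRoot r i) (simpleRoot r (i-1)) with hxa
  have hrep := altVec_three r i (i-1) (i+1) (by omega) (by omega) (by omega) (by omega)
    (by omega) (by omega) xa xb xc hxc hxb hxa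
  have eG1 : ip r (simpleRoot r i) (simpleRoot r (i+1)) = -1 := by
    rw [ip_ss r i (i+1) (by omega) (by omega) (by omega) (by omega)]
    split_ifs <;> first | (exfalso; omega) | norm_num
  have eG2 : ip r (simpleRoot r (i-1)) (simpleRoot r (i+1)) = 0 := by
    rw [ip_ss r (i-1) (i+1) (by omega) (by omega) (by omega) (by omega)]
    split_ifs <;> first | (exfalso; omega) | norm_num
  have eG3 : ip r (simpleRoot r i) (simpleRoot r (i-1)) = -1 := by
    rw [ip_ss r i (i-1) (by omega) (by omega) (by omega) (by omega)]
    split_ifs <;> first | (exfalso; omega) | norm_num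
  have exa : 3 ≤ xa := by
    rw [hxa, hxb, hxc, eG1, eG2, eG3, ipv r (i-1) (by omega) (by omega),
      ipv r i (by omega) (by omega), ipv r (i+1) (by omega) (by omega)]
    simp only [mul_neg_one, mul_zero, sub_zero, sub_neg_eq_add]
    split_ifs <;> first | (exfalso; omega) | norm_num
  refine master r _
    (fun j => (2:ℝ) - (if j = i + 1 then xc else 0) - (if j = i - 1 then xb else 0)
      - (if j = i then xa else 0)) hrep
    i (by simp only [Finset.mem_Icc]; omega) ?_
  show (2:ℝ) - (if i = i + 1 then xc else 0) - (if i = i - 1 then xb else 0)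
      - (if i = i then xa else 0) < 0
  rw [if_neg (by omega : ¬ i = i + 1), if_neg (by omega : ¬ i = i - 1), if_pos rfl]
  linarith

lemma case_threeC (r i : ℕ) (h2i : 2 ≤ i) (hir : i ≤ r - 1) (hr : 2 ≤ r) :
    HasNegSimpleCoeff r (altVec r [i + 1, i, i - 1])
      ∧ ¬ IsNNPosComb r (altVec r [i + 1, i, i - 1]) := by
  have hr3 : 3 ≤ r := by omega
  set xc : ℝ := ip r (simpleRoot r (i-1)) (highestRoot r + rho r) with hxc
  set xb : ℝ := ip r (simpleRoot r i) (highestRoot r + rho r)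
      - xc * ip r (simpleRoot r i) (simpleRoot r (i-1)) with hxb
  set xa : ℝ := ip r (simpleRoot r (i+1)) (highestRoot r + rho r)
      - xc * ip r (simpleRoot r (i+1)) (simpleRoot r (i-1))
      - xb * ip r (simpleRoot r (i+1)) (simpleRoot r i) with hxa
  have hrep := altVec_three r (i+1) i (i-1) (by omega) (by omega) (by omega) (by omega)
    (by omega) (by omega) xa xb xc hxc hxb hxa
  have eG1 : ip r (simpleRoot r i) (simpleRoot r (i-1)) = -1 := by
    rw [ip_ss r i (i-1) (by omega) (by omega) (by omega) (by omega)]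
    split_ifs <;> first | (exfalso; omega) | norm_num
  have eG2 : ip r (simpleRoot r (i+1)) (simpleRoot r (i-1)) = 0 := by
    rw [ip_ss r (i+1) (i-1) (by omega) (by omega) (by omega) (by omega)]
    split_ifs <;> first | (exfalso; omega) | norm_num
  have eG3 : ip r (simpleRoot r (i+1)) (simpleRoot r i) = -1 := by
    rw [ip_ss r (i+1) i (by omega) (by omega) (by omega) (by omega)]
    split_ifs <;> first | (exfalso; omega) | norm_num
  have exa : 3 ≤ xa := by
    rw [hxa, hxb, hxc, eG1, eG2, eG3, ipv r (i-1) (by omega) (by omega),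
      ipv r i (by omega) (by omega), ipv r (i+1) (by omega) (by omega)]
    simp only [mul_neg_one, mul_zero, sub_zero, sub_neg_eq_add]
    split_ifs <;> first | (exfalso; omega) | norm_num
  refine master r _
    (fun j => (2:ℝ) - (if j = i - 1 then xc else 0) - (if j = i then xb else 0)
      - (if j = i + 1 then xa else 0)) hrep
    (i + 1) (by simp only [Finset.mem_Icc]; omega) ?_
  show (2:ℝ) - (if i + 1 = i - 1 then xc else 0) - (if i + 1 = i then xb else 0)
      - (if i + 1 = i + 1 then xa else 0) < 0
  rw [if_neg (by omega : ¬ i + 1 = i - 1), if_neg (by omega : ¬ i + 1 = i), if_pos rfl]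
  linarith

end MyCases


/-- In the Weyl group of type `A_r` (`r ≥ 2`), for each of the words
`w ∈ {s_2 s_1, s_1 s_2, s_{r-1} s_r, s_r s_{r-1}}` and, for `2 ≤ i ≤ r - 1`,
`w ∈ {s_{i-1} s_i s_{i+1}, s_i s_{i-1} s_{i+1}, s_{i+1} s_i s_{i-1}}`, the vector
`w(α̃ + ρ) + α̃ - ρ` has a strictly negative coefficient on some simple root when expanded
in the simple-root basis; hence `w ∉ A(α̃, -α̃)`. -/
theorem forbidden_subwords (r : ℕ) (hr : 2 ≤ r) :
    (HasNegSimpleCoeff r (altVec r [2, 1]) ∧ ¬ IsNNPosComb r (altVec r [2, 1])) ∧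
    (HasNegSimpleCoeff r (altVec r [1, 2]) ∧ ¬ IsNNPosComb r (altVec r [1, 2])) ∧
    (HasNegSimpleCoeff r (altVec r [r - 1, r]) ∧ ¬ IsNNPosComb r (altVec r [r - 1, r])) ∧
    (HasNegSimpleCoeff r (altVec r [r, r - 1]) ∧ ¬ IsNNPosComb r (altVec r [r, r - 1])) ∧
    (∀ i, 2 ≤ i → i ≤ r - 1 →
      (HasNegSimpleCoeff r (altVec r [i - 1, i, i + 1]) ∧
        ¬ IsNNPosComb r (altVec r [i - 1, i, i + 1])) ∧
      (HasNegSimpleCoeff r (altVec r [i, i - 1, i + 1]) ∧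
        ¬ IsNNPosComb r (altVec r [i, i - 1, i + 1])) ∧
      (HasNegSimpleCoeff r (altVec r [i + 1, i, i - 1]) ∧
        ¬ IsNNPosComb r (altVec r [i + 1, i, i - 1]))) := by
  refine ⟨?_, ?_, ?_, ?_, ?_⟩
  · exact case_two r 2 1 hr (by omega) hr (by omega) (by omega) (Or.inl rfl)
      (Or.inr (Or.inl rfl))
  · exact case_two r 1 2 hr (by omega) (by omega) (by omega) hr (Or.inr rfl)
      (Or.inl rfl)
  · exact case_two r (r - 1) r hr (by omega) (by omega) (by omega) le_rfl
      (Or.inr (by omega)) (Or.inr (Or.inr (Or.inr rfl)))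
  · exact case_two r r (r - 1) hr (by omega) le_rfl (by omega) (by omega)
      (Or.inl (by omega)) (Or.inr (Or.inr (Or.inl rfl)))
  · intro i h2i hir
    exact ⟨case_threeA r i h2i hir hr, case_threeB r i h2i hir hr,
      case_threeC r i h2i hir hr⟩
end

section
/- For the type A_r Weyl group with r ≥ 1, the number of elements of the Weyl alternation set A(α̃, -α_1) equals F_{r+1}; equivalently, the number of products of pairwise commuting simple reflections chosen from {s_1, ..., s_{r-1}} (including the empty product) is F_{r+1}. -/
open Finset

/-- The type `A_r` Weyl group is the symmetric group on the `r + 1` coordinates; `σ` acts on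
vectors by permuting coordinates. -/
def permAct (r : ℕ) (σ : Equiv.Perm (Fin (r + 1))) (v : Fin (r + 1) → ℝ) :
    Fin (r + 1) → ℝ := v ∘ σ.symm




def waSet (m : ℕ) : Finset (Finset ℕ) :=
  ((Finset.Icc 1 m).powerset).filter (fun S : Finset ℕ => ∀ k ∈ S, k + 1 ∉ S)

lemma waSet_zero : waSet 0 = {∅} := by decide

lemma waSet_one : waSet 1 = {∅, {1}} := by decide

lemma mem_waSet {m : ℕ} {S : Finset ℕ} :
    S ∈ waSet m ↔ S ⊆ Finset.Icc 1 m ∧ ∀ k ∈ S, k + 1 ∉ S := by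
  simp [waSet]

lemma waSet_rec (m : ℕ) : (waSet (m+2)).card = (waSet (m+1)).card + (waSet m).card := by
  classical
  have hsplit := Finset.card_filter_add_card_filter_not
    (s := waSet (m+2)) (p := fun S : Finset ℕ => (m+2) ∉ S)
  have h1 : (waSet (m+2)).filter (fun S => (m+2) ∉ S) = waSet (m+1) := by
    ext S
    simp only [Finset.mem_filter, mem_waSet]
    constructor
    · rintro ⟨⟨hs, hn⟩, hm⟩
      refine ⟨fun k hk => ?_, hn⟩
      have h2 := hs hk
      simp only [Finset.mem_Icc] at h2 ⊢
      have : k ≠ m + 2 := fun h => hm (h ▸ hk)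
      omega
    · rintro ⟨hs, hn⟩
      have hm : (m+2) ∉ S := fun h => by
        have := hs h; simp only [Finset.mem_Icc] at this; omega
      refine ⟨⟨fun k hk => ?_, hn⟩, hm⟩
      have := hs hk; simp only [Finset.mem_Icc] at this ⊢; omega
  have h2 : ((waSet (m+2)).filter (fun S => ¬ (m+2) ∉ S)).card = (waSet m).card := by
    refine Finset.card_bij' (fun S _ => S.erase (m+2)) (fun T _ => insert (m+2) T)
      ?hi ?hj ?li ?ri
    case hi =>
      intro S hS
      simp only [Finset.mem_filter, mem_waSet, not_not] at hS
      obtain ⟨⟨hs, hn⟩, hm⟩ := hS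
      rw [mem_waSet]
      constructor
      · intro k hk
        rcases Finset.mem_erase.mp hk with ⟨hne, hkS⟩
        have hk2 := hs hkS
        simp only [Finset.mem_Icc] at hk2 ⊢
        have : k ≠ m + 1 := fun h => (hn _ hkS) (h ▸ hm)
        omega
      · intro k hk hc
        exact (hn k (Finset.mem_of_mem_erase hk)) (Finset.mem_of_mem_erase hc)
    case hj =>
      intro T hT
      rw [mem_waSet] at hT
      obtain ⟨hs, hn⟩ := hT
      simp only [Finset.mem_filter, mem_waSet, not_not]
      refine ⟨⟨?_, ?_⟩, Finset.mem_insert_self _ _⟩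
      · intro k hk
        rcases Finset.mem_insert.mp hk with h | h
        · subst h; simp [Finset.mem_Icc]
        · have := hs h; simp only [Finset.mem_Icc] at this ⊢; omega
      · intro k hk hc
        rcases Finset.mem_insert.mp hk with h | h
        · rcases Finset.mem_insert.mp hc with h' | h'
          · omega
          · have := hs h'; simp only [Finset.mem_Icc] at this; omega
        · rcases Finset.mem_insert.mp hc with h' | h'
          · have := hs h; simp only [Finset.mem_Icc] at this; omega
          · exact (hn k h) h'
    case li =>
      intro S hS
      simp only [Finset.mem_filter, not_not] at hS
      exact Finset.insert_erase hS.2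
    case ri =>
      intro T hT
      rw [mem_waSet] at hT
      have hnot : (m+2) ∉ T := fun h => by
        have := hT.1 h; simp only [Finset.mem_Icc] at this; omega
      exact Finset.erase_insert hnot
  rw [h1] at hsplit
  omega

lemma waSet_card (m : ℕ) : (waSet m).card = Nat.fib (m + 2) := by
  induction m using Nat.strong_induction_on with
  | _ m ih =>
    match m with
    | 0 => simp [waSet_zero]
    | 1 => rw [waSet_one]; decide
    | (k+2) =>
      rw [waSet_rec k, ih (k+1) (by omega), ih k (by omega)]
      show Nat.fib (k+2+1) + Nat.fib (k+2) = Nat.fib (k+2+2)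
      conv_rhs => rw [Nat.fib_add_two]
      omega

----------------------------------------------------------------
-- prefix sums
----------------------------------------------------------------

def Pfin (r i : ℕ) : Finset (Fin (r+1)) := Finset.univ.filter (fun k => (k:ℕ) < i)

noncomputable def pref (r : ℕ) (w : Fin (r+1) → ℝ) (i : ℕ) : ℝ := ∑ k ∈ Pfin r i, w k

lemma mem_Pfin {r i : ℕ} {k : Fin (r+1)} : k ∈ Pfin r i ↔ (k:ℕ) < i := by
  simp [Pfin]

lemma Pfin_zero (r : ℕ) : Pfin r 0 = ∅ := by
  ext k; simp [mem_Pfin]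

lemma Pfin_succ (r i : ℕ) (h : i ≤ r) :
    Pfin r (i+1) = insert ⟨i, by omega⟩ (Pfin r i) := by
  ext k
  simp only [mem_Pfin, Finset.mem_insert, Fin.ext_iff]
  omega

lemma Pfin_top (r i : ℕ) (h : r + 1 ≤ i) : Pfin r i = Finset.univ := by
  ext k; simpa [mem_Pfin] using lt_of_lt_of_le k.isLt h

lemma pref_zero (r : ℕ) (w : Fin (r+1) → ℝ) : pref r w 0 = 0 := by
  simp [pref, Pfin_zero]

lemma pref_succ (r i : ℕ) (w : Fin (r+1) → ℝ) (h : i ≤ r) :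
    pref r w (i+1) = pref r w i + w ⟨i, by omega⟩ := by
  rw [pref, Pfin_succ r i h, Finset.sum_insert (by simp [mem_Pfin])]
  rw [pref]; ring

lemma pref_top (r : ℕ) (w : Fin (r+1) → ℝ) : pref r w (r+1) = ∑ k, w k := by
  rw [pref, Pfin_top r (r+1) le_rfl]

lemma pref_ext (r : ℕ) (v w : Fin (r+1) → ℝ)
    (h : ∀ i, i ≤ r + 1 → pref r v i = pref r w i) : v = w := by
  funext j
  have h1 := h j (by omega)
  have h2 := h (j+1) (by omega)
  rw [pref_succ r j v (by omega), pref_succ r j w (by omega)] at h2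
  have : v ⟨(j:ℕ), by omega⟩ = w ⟨(j:ℕ), by omega⟩ := by
    rw [h1] at h2; linarith
  simpa using this

lemma pref_add (r : ℕ) (v w : Fin (r+1) → ℝ) (i : ℕ) :
    pref r (v + w) i = pref r v i + pref r w i := by
  simp [pref, Finset.sum_add_distrib]

lemma pref_sub (r : ℕ) (v w : Fin (r+1) → ℝ) (i : ℕ) :
    pref r (v - w) i = pref r v i - pref r w i := by
  simp [pref, Finset.sum_sub_distrib]

lemma pref_smul (r : ℕ) (c : ℝ) (w : Fin (r+1) → ℝ) (i : ℕ) :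
    pref r (c • w) i = c * pref r w i := by
  simp [pref, Finset.mul_sum]

lemma pref_sum {α : Type*} (r : ℕ) (s : Finset α) (f : α → Fin (r+1) → ℝ) (i : ℕ) :
    pref r (∑ x ∈ s, f x) i = ∑ x ∈ s, pref r (f x) i := by
  simp only [pref]
  rw [Finset.sum_comm]
  congr 1
  funext k
  simp

lemma pref_stdVec (r a i : ℕ) (ha : 1 ≤ a) (ha' : a ≤ r + 1) :
    pref r (stdVec r a) i = if a ≤ i then 1 else 0 := by
  have hb : a - 1 < r + 1 := by omega
  have : ∀ k : Fin (r+1), stdVec r a k = if k = ⟨a-1, hb⟩ then 1 else 0 := by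
    intro k
    simp only [stdVec, Fin.ext_iff]
    congr 1
    simp only [eq_iff_iff]
    omega
  rw [pref]
  rw [Finset.sum_congr rfl (fun k _ => this k), Finset.sum_ite_eq' (Pfin r i)]
  simp only [mem_Pfin]
  congr 1
  simp only [eq_iff_iff]
  omega

lemma pref_simpleRoot (r a i : ℕ) (ha : 1 ≤ a) (ha' : a ≤ r) :
    pref r (simpleRoot r a) i = if i = a then 1 else 0 := by
  rw [simpleRoot, pref_sub, pref_stdVec r a i ha (by omega),
    pref_stdVec r (a+1) i (by omega) (by omega)]
  rcases Nat.lt_or_ge i a with h | h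
  · rw [if_neg (by omega), if_neg (by omega), if_neg (by omega)]; ring
  rcases Nat.eq_or_lt_of_le h with h' | h'
  · rw [if_pos (by omega), if_neg (by omega), if_pos (by omega)]; ring
  · rw [if_pos (by omega), if_pos (by omega), if_neg (by omega)]; ring

lemma pref_posRoot (r a b i : ℕ) (ha : 1 ≤ a) (hb : b ≤ r) :
    pref r (posRoot r a b) i = if a ≤ i ∧ i ≤ b then 1 else 0 := by
  rw [posRoot, pref_sum]
  have hc : ∀ k ∈ Finset.Icc a b, pref r (simpleRoot r k) i = if i = k then 1 else 0 := by
    intro k hk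
    rw [Finset.mem_Icc] at hk
    exact pref_simpleRoot r k i (by omega) (by omega)
  rw [Finset.sum_congr rfl hc, Finset.sum_ite_eq (Finset.Icc a b) i (fun _ => (1:ℝ))]
  simp only [Finset.mem_Icc]

lemma pref_highestRoot (r i : ℕ) (hr : 1 ≤ r) :
    pref r (highestRoot r) i = if 1 ≤ i ∧ i ≤ r then 1 else 0 := by
  have : highestRoot r = posRoot r 1 r := rfl
  rw [this, pref_posRoot r 1 r i le_rfl le_rfl]

----------------------------------------------------------------
-- coordinates
----------------------------------------------------------------

lemma stdVec_apply (r a : ℕ) (j : Fin (r+1)) :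
    stdVec r a j = if (j:ℕ) + 1 = a then 1 else 0 := rfl

lemma posRoot_apply (r a b : ℕ) (j : Fin (r+1)) :
    posRoot r a b j = (if a ≤ (j:ℕ)+1 ∧ (j:ℕ)+1 ≤ b then 1 else 0)
      - (if a ≤ (j:ℕ) ∧ (j:ℕ) ≤ b then 1 else 0) := by
  have h1 : posRoot r a b j = ∑ k ∈ Finset.Icc a b, simpleRoot r k j := by
    rw [posRoot, Finset.sum_apply]
  rw [h1]
  have h2 : ∀ k ∈ Finset.Icc a b, simpleRoot r k j
      = (if (j:ℕ)+1 = k then (1:ℝ) else 0) - (if (j:ℕ) = k then 1 else 0) := by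
    intro k _
    show stdVec r k j - stdVec r (k+1) j = _
    rw [stdVec_apply, stdVec_apply]
    congr 2
    simp only [eq_iff_iff]; omega
  rw [Finset.sum_congr rfl h2, Finset.sum_sub_distrib,
    Finset.sum_ite_eq (Finset.Icc a b) ((j:ℕ)+1) (fun _ => (1:ℝ)),
    Finset.sum_ite_eq (Finset.Icc a b) ((j:ℕ)) (fun _ => (1:ℝ))]
  simp only [Finset.mem_Icc]

lemma pair_count (r x : ℕ) :
    ∑ p ∈ (Finset.Icc 1 r ×ˢ Finset.Icc 1 r).filter (fun p => p.1 ≤ p.2),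
      (if p.1 ≤ x ∧ x ≤ p.2 then (1:ℝ) else 0) = ((x * (r + 1 - x) : ℕ) : ℝ) := by
  rw [Finset.sum_boole]
  congr 1
  rw [Finset.filter_filter]
  have : Finset.filter (fun p : ℕ × ℕ => p.1 ≤ p.2 ∧ p.1 ≤ x ∧ x ≤ p.2)
      (Finset.Icc 1 r ×ˢ Finset.Icc 1 r) = Finset.Icc 1 x ×ˢ Finset.Icc x r := by
    ext p
    simp only [Finset.mem_filter, Finset.mem_product, Finset.mem_Icc]
    omega
  rw [this, Finset.card_product, Nat.card_Icc, Nat.card_Icc]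
  congr 1 <;> omega

lemma rho_apply (r : ℕ) (j : Fin (r+1)) : rho r j = (r:ℝ)/2 - (j:ℕ) := by
  have h1 : rho r j = (1/2 : ℝ) *
      ∑ p ∈ (Finset.Icc 1 r ×ˢ Finset.Icc 1 r).filter (fun p => p.1 ≤ p.2),
        posRoot r p.1 p.2 j := by
    rw [rho]; rw [Pi.smul_apply, Finset.sum_apply]; simp
  rw [h1, Finset.sum_congr rfl (fun p _ => posRoot_apply r p.1 p.2 j),
    Finset.sum_sub_distrib, pair_count r ((j:ℕ)+1), pair_count r (j:ℕ)]
  have hj : (j:ℕ) ≤ r := by omega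
  have e1 : (r + 1 - ((j:ℕ)+1)) = r - (j:ℕ) := by omega
  have e2 : (r + 1 - (j:ℕ)) = (r - (j:ℕ)) + 1 := by omega
  rw [e1, e2]
  have hc : ((r - (j:ℕ) : ℕ) : ℝ) = (r:ℝ) - (j:ℕ) := by
    push_cast [Nat.cast_sub hj]; ring
  push_cast [hc]
  ring

lemma highestRoot_apply (r : ℕ) (hr : 1 ≤ r) (j : Fin (r+1)) :
    highestRoot r j = (if (j:ℕ) = 0 then 1 else 0) - (if (j:ℕ) = r then 1 else 0) := by
  have : highestRoot r j = posRoot r 1 r j := rfl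
  rw [this, posRoot_apply]
  have hj : (j:ℕ) < r + 1 := j.isLt
  by_cases hD : (j:ℕ) = r
  · rw [if_neg (by omega), if_pos (by omega), if_neg (by omega), if_pos hD]
  · by_cases hC : (j:ℕ) = 0
    · rw [if_pos (by omega), if_neg (by omega), if_pos hC, if_neg hD]
    · rw [if_pos (by omega), if_pos (by omega), if_neg hC, if_neg hD]; ring

----------------------------------------------------------------
-- Dfun
----------------------------------------------------------------

def Dfun (r : ℕ) (σ : Equiv.Perm (Fin (r+1))) (i : ℕ) : ℤ :=
  ((∑ k ∈ Pfin r i, ((k:ℕ) : ℤ)) - ∑ k ∈ Pfin r i, ((σ.symm k : ℕ) : ℤ))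
  + (if ((σ ⟨0, by omega⟩ : Fin (r+1)) : ℕ) < i then 1 else 0)
  - (if ((σ ⟨r, by omega⟩ : Fin (r+1)) : ℕ) < i then 1 else 0)
  + (if i = 1 then 1 else 0)

lemma pref_target (r : ℕ) (hr : 1 ≤ r) (σ : Equiv.Perm (Fin (r+1))) (i : ℕ) :
    pref r (permAct r σ (highestRoot r + rho r) + simpleRoot r 1 - rho r) i
    = ((Dfun r σ i : ℤ) : ℝ) := by
  rw [pref_sub, pref_add]
  have hperm : pref r (permAct r σ (highestRoot r + rho r)) i
      = (∑ k ∈ Pfin r i, ((r:ℝ)/2 - ((σ.symm k : Fin (r+1)):ℕ)))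
        + (if ((σ ⟨0, by omega⟩ : Fin (r+1)):ℕ) < i then 1 else 0)
        - (if ((σ ⟨r, by omega⟩ : Fin (r+1)):ℕ) < i then 1 else 0) := by
    rw [pref]
    have hc : ∀ k ∈ Pfin r i, permAct r σ (highestRoot r + rho r) k
        = (((r:ℝ)/2 - ((σ.symm k : Fin (r+1)):ℕ))
          + (if k = σ ⟨0, by omega⟩ then 1 else 0))
          - (if k = σ ⟨r, by omega⟩ then 1 else 0) := by
      intro k _
      show (highestRoot r + rho r) (σ.symm k) = _
      rw [Pi.add_apply, highestRoot_apply r hr, rho_apply]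
      have e0 : ((σ.symm k : Fin (r+1)):ℕ) = 0 ↔ k = σ ⟨0, by omega⟩ := by
        rw [← Equiv.symm_apply_eq, Fin.ext_iff]
      have er : ((σ.symm k : Fin (r+1)):ℕ) = r ↔ k = σ ⟨r, by omega⟩ := by
        rw [← Equiv.symm_apply_eq, Fin.ext_iff]
      rw [if_congr e0 rfl rfl, if_congr er rfl rfl]
      ring
    rw [Finset.sum_congr rfl hc]
    rw [Finset.sum_sub_distrib, Finset.sum_add_distrib,
      Finset.sum_ite_eq' (Pfin r i) (σ ⟨0, by omega⟩) (fun _ => (1:ℝ)),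
      Finset.sum_ite_eq' (Pfin r i) (σ ⟨r, by omega⟩) (fun _ => (1:ℝ))]
    simp only [mem_Pfin]
  have hsimple : pref r (simpleRoot r 1) i = if i = 1 then 1 else 0 :=
    pref_simpleRoot r 1 i le_rfl hr
  have hrho : pref r (rho r) i = ∑ k ∈ Pfin r i, ((r:ℝ)/2 - ((k : Fin (r+1)):ℕ)) := by
    rw [pref]
    exact Finset.sum_congr rfl (fun k _ => rho_apply r k)
  rw [hperm, hsimple, hrho, Dfun]
  rw [Finset.sum_sub_distrib, Finset.sum_sub_distrib]
  push_cast [apply_ite (fun z : ℤ => (z:ℝ))]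
  ring

lemma Dfun_top (r : ℕ) (hr : 1 ≤ r) (σ : Equiv.Perm (Fin (r+1))) :
    Dfun r σ (r+1) = 0 := by
  rw [Dfun]
  have h1 : ∑ k ∈ Pfin r (r+1), ((σ.symm k : ℕ) : ℤ)
      = ∑ k ∈ Pfin r (r+1), ((k:ℕ) : ℤ) := by
    rw [Pfin_top r (r+1) le_rfl]
    exact Equiv.sum_comp σ.symm (fun k => ((k : ℕ) : ℤ))
  rw [h1, if_pos (by omega), if_pos (by omega), if_neg (by omega)]
  ring

lemma mem_iff (r : ℕ) (hr : 1 ≤ r) (σ : Equiv.Perm (Fin (r+1))) :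
    IsNNPosComb r (permAct r σ (highestRoot r + rho r) + simpleRoot r 1 - rho r)
    ↔ ∀ i, 1 ≤ i → i ≤ r → 0 ≤ Dfun r σ i := by
  constructor
  · rintro ⟨c, hc⟩ i h1 h2
    have hp : pref r (permAct r σ (highestRoot r + rho r) + simpleRoot r 1 - rho r) i
        = ((∑ p ∈ (Finset.Icc 1 r ×ˢ Finset.Icc 1 r).filter (fun p => p.1 ≤ p.2),
            c p * (if p.1 ≤ i ∧ i ≤ p.2 then 1 else 0) : ℕ) : ℝ) := by
      rw [hc, pref_sum]
      push_cast
      refine Finset.sum_congr rfl (fun p hp => ?_)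
      rw [Finset.mem_filter, Finset.mem_product, Finset.mem_Icc, Finset.mem_Icc] at hp
      rw [pref_smul, pref_posRoot r p.1 p.2 i (by omega) (by omega)]
    rw [pref_target r hr σ i] at hp
    have : Dfun r σ i = ((∑ p ∈ (Finset.Icc 1 r ×ˢ Finset.Icc 1 r).filter
        (fun p => p.1 ≤ p.2), c p * (if p.1 ≤ i ∧ i ≤ p.2 then 1 else 0) : ℕ) : ℤ) := by
      exact_mod_cast hp
    rw [this]
    positivity
  · intro h
    classical
    set c : ℕ → ℕ := fun i => (Dfun r σ i).toNat with hcdef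
    refine ⟨fun p => if p.1 = p.2 then c p.1 else 0, ?_⟩
    apply pref_ext
    intro i hi
    have hrhs : pref r (∑ p ∈ (Finset.Icc 1 r ×ˢ Finset.Icc 1 r).filter
          (fun p => p.1 ≤ p.2),
          ((if p.1 = p.2 then c p.1 else 0 : ℕ) : ℝ) • posRoot r p.1 p.2) i
        = if 1 ≤ i ∧ i ≤ r then (c i : ℝ) else 0 := by
      rw [pref_sum]
      have hterm : ∀ p ∈ (Finset.Icc 1 r ×ˢ Finset.Icc 1 r).filter (fun p => p.1 ≤ p.2),
          pref r (((if p.1 = p.2 then c p.1 else 0 : ℕ) : ℝ) • posRoot r p.1 p.2) i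
          = ((if p.1 = p.2 then c p.1 else 0 : ℕ) : ℝ)
            * (if p.1 ≤ i ∧ i ≤ p.2 then 1 else 0) := by
        intro p hp
        rw [Finset.mem_filter, Finset.mem_product, Finset.mem_Icc, Finset.mem_Icc] at hp
        rw [pref_smul, pref_posRoot r p.1 p.2 i (by omega) (by omega)]
      rw [Finset.sum_congr rfl hterm]
      by_cases hmem : 1 ≤ i ∧ i ≤ r
      · rw [if_pos hmem]
        rw [Finset.sum_eq_single_of_mem (i, i)
          (by simp [Finset.mem_filter, Finset.mem_product, Finset.mem_Icc]; omega)]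
        · rw [if_pos rfl, if_pos (by omega)]; ring
        · intro p hp hne
          rcases p with ⟨pa, pb⟩
          simp only [Finset.mem_filter, Finset.mem_product, Finset.mem_Icc] at hp
          simp only [ne_eq, Prod.mk.injEq, not_and] at hne
          by_cases he : pa = pb
          · have hni : ¬(pa ≤ i ∧ i ≤ pb) := by
              rintro ⟨h1', h2'⟩
              exact hne (by omega) (by omega)
            rw [if_neg hni]
            ring
          · rw [if_neg he]; push_cast; ring
      · rw [if_neg hmem]
        apply Finset.sum_eq_zero
        intro p hp
        rw [Finset.mem_filter, Finset.mem_product, Finset.mem_Icc, Finset.mem_Icc] at hp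
        by_cases he : p.1 = p.2
        · have hni : ¬(p.1 ≤ i ∧ i ≤ p.2) := by omega
          rw [if_neg hni]; ring
        · rw [if_neg he]; push_cast; ring
    rw [hrhs, pref_target r hr σ i]
    rcases Nat.eq_or_lt_of_le hi with he | hlt
    · rw [he, Dfun_top r hr σ, if_neg (by omega)]
      norm_num
    · by_cases h0 : i = 0
      · subst h0
        rw [if_neg (by omega)]
        have : Dfun r σ 0 = 0 := by
          rw [Dfun, Pfin_zero]
          simp
        rw [this]; norm_num
      · have hi1 : 1 ≤ i := by omega
        have hir : i ≤ r := by omega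
        rw [if_pos ⟨hi1, hir⟩]
        have hnn := h i hi1 hir
        have hcast : ((Dfun r σ i).toNat : ℤ) = Dfun r σ i := Int.toNat_of_nonneg hnn
        exact_mod_cast congrArg (fun z : ℤ => (z:ℝ)) hcast.symm

----------------------------------------------------------------
-- permOf
----------------------------------------------------------------

def goodS (r : ℕ) (S : Finset ℕ) : Prop :=
  S ⊆ Finset.Icc 1 (r-1) ∧ ∀ k ∈ S, k + 1 ∉ S

def permOfFun (r : ℕ) (S : Finset ℕ) : Fin (r+1) → Fin (r+1) := fun j =>
  if h : (j:ℕ) + 1 ∈ S ∧ (j:ℕ) + 1 < r + 1 then ⟨(j:ℕ)+1, h.2⟩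
  else if (j:ℕ) ∈ S then ⟨(j:ℕ)-1, by omega⟩
  else j

section PermOf

variable {r : ℕ} {S : Finset ℕ}

lemma goodS_bounds (hS : goodS r S) {k : ℕ} (hk : k ∈ S) : 1 ≤ k ∧ k ≤ r - 1 := by
  have := hS.1 hk
  rwa [Finset.mem_Icc] at this

lemma pf_val1 (hr : 1 ≤ r) (hS : goodS r S) {j : Fin (r+1)} (h : (j:ℕ) + 1 ∈ S) :
    (permOfFun r S j : ℕ) = (j:ℕ) + 1 := by
  have hb := goodS_bounds hS h
  rw [permOfFun, dif_pos ⟨h, by omega⟩]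

lemma pf_val2 (hr : 1 ≤ r) (hS : goodS r S) {j : Fin (r+1)} (h : (j:ℕ) ∈ S) :
    (permOfFun r S j : ℕ) = (j:ℕ) - 1 ∧ 1 ≤ (j:ℕ) := by
  have hb := goodS_bounds hS h
  have hnot : ¬((j:ℕ) + 1 ∈ S ∧ (j:ℕ) + 1 < r + 1) := by
    rintro ⟨h1, _⟩
    exact (hS.2 _ h) h1
  rw [permOfFun, dif_neg hnot, if_pos h]
  exact ⟨rfl, by omega⟩

lemma pf_val3 (hr : 1 ≤ r) (hS : goodS r S) {j : Fin (r+1)}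
    (h1 : (j:ℕ) + 1 ∉ S) (h2 : (j:ℕ) ∉ S) : permOfFun r S j = j := by
  have hnot : ¬((j:ℕ) + 1 ∈ S ∧ (j:ℕ) + 1 < r + 1) := by
    rintro ⟨h', _⟩; exact h1 h'
  rw [permOfFun, dif_neg hnot, if_neg h2]

lemma pf_invol (hr : 1 ≤ r) (hS : goodS r S) : Function.Involutive (permOfFun r S) := by
  intro j
  by_cases h1 : (j:ℕ) + 1 ∈ S
  · have hv := pf_val1 hr hS h1
    have h2 : (permOfFun r S j : ℕ) ∈ S := by rw [hv]; exact h1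
    have hv2 := (pf_val2 hr hS h2).1
    apply Fin.ext
    rw [hv2, hv]
    omega
  · by_cases h2 : (j:ℕ) ∈ S
    · obtain ⟨hv, hj1⟩ := pf_val2 hr hS h2
      have h3 : (permOfFun r S j : ℕ) + 1 ∈ S := by rw [hv]; rwa [Nat.sub_add_cancel hj1]
      have hv2 := pf_val1 hr hS h3
      apply Fin.ext
      rw [hv2, hv]
      omega
    · rw [pf_val3 hr hS h1 h2, pf_val3 hr hS h1 h2]

open Classical in
noncomputable def permOf (r : ℕ) (S : Finset ℕ) : Equiv.Perm (Fin (r+1)) :=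
  if h : 1 ≤ r ∧ goodS r S then Function.Involutive.toPerm _ (pf_invol h.1 h.2) else 1

lemma permOf_apply (hr : 1 ≤ r) (hS : goodS r S) (j : Fin (r+1)) :
    permOf r S j = permOfFun r S j := by
  rw [permOf, dif_pos ⟨hr, hS⟩]
  rfl

lemma permOf_symm (hr : 1 ≤ r) (hS : goodS r S) : (permOf r S).symm = permOf r S := by
  apply Equiv.ext
  intro j
  rw [Equiv.symm_apply_eq]
  have : ∀ x, permOf r S (permOf r S x) = x := by
    intro x
    rw [permOf_apply hr hS, permOf_apply hr hS]
    exact pf_invol hr hS x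
  exact (this j).symm

lemma permOf_mem_iff (hr : 1 ≤ r) (hS : goodS r S) (k : ℕ) (hk1 : 1 ≤ k) (hk2 : k ≤ r - 1) :
    k ∈ S ↔ (permOf r S ⟨k - 1, by omega⟩ : ℕ) = k := by
  rw [permOf_apply hr hS]
  have he : (⟨k-1, by omega⟩ : Fin (r+1)) = ⟨k-1, by omega⟩ := rfl
  constructor
  · intro h
    have : ((⟨k-1, by omega⟩ : Fin (r+1)) : ℕ) + 1 ∈ S := by
      simpa [Nat.sub_add_cancel hk1] using h
    rw [pf_val1 hr hS this]
    simp
    omega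
  · intro h
    by_contra hnot
    have hc : ((⟨k-1, by omega⟩ : Fin (r+1)) : ℕ) + 1 ∉ S := by
      simpa [Nat.sub_add_cancel hk1] using hnot
    by_cases h2 : ((⟨k-1, by omega⟩ : Fin (r+1)) : ℕ) ∈ S
    · have := (pf_val2 hr hS h2).1
      rw [this] at h
      simp at h
      omega
    · rw [pf_val3 hr hS hc h2] at h
      simp at h
      omega

lemma permOf_injOn (hr : 1 ≤ r) {S T : Finset ℕ} (hS : goodS r S) (hT : goodS r T)
    (h : permOf r S = permOf r T) : S = T := by
  ext k
  by_cases hk : 1 ≤ k ∧ k ≤ r - 1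
  · rw [permOf_mem_iff hr hS k hk.1 hk.2, permOf_mem_iff hr hT k hk.1 hk.2, h]
  · constructor
    · intro hmem; exact absurd (goodS_bounds hS hmem) hk
    · intro hmem; exact absurd (goodS_bounds hT hmem) hk

end PermOf

----------------------------------------------------------------
-- forward direction
----------------------------------------------------------------

lemma sum_permOf {r : ℕ} {S : Finset ℕ} (hr : 1 ≤ r) (hS : goodS r S) :
    ∀ i, i ≤ r → (∑ k ∈ Pfin r i, ((permOf r S k : ℕ) : ℤ))
      - (∑ k ∈ Pfin r i, ((k:ℕ) : ℤ)) = if i ∈ S then 1 else 0 := by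
  intro i
  induction i with
  | zero =>
    intro _
    rw [Pfin_zero]
    have : 0 ∉ S := fun h => by have := goodS_bounds hS h; omega
    simp [this]
  | succ i ih =>
    intro hi
    have hii : i ≤ r := by omega
    rw [Pfin_succ r i hii, Finset.sum_insert (by simp [mem_Pfin]),
      Finset.sum_insert (by simp [mem_Pfin])]
    have hprev := ih hii
    by_cases h1 : i + 1 ∈ S
    · have hterm : (permOf r S ⟨i, by omega⟩ : ℕ) = i + 1 := by
        rw [permOf_apply hr hS]
        exact pf_val1 hr hS (by simpa using h1)
      have h0 : i ∉ S := fun h => (hS.2 _ h) h1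
      rw [if_pos h1]
      rw [if_neg h0] at hprev
      rw [hterm]
      push_cast
      omega
    · rw [if_neg h1]
      by_cases h2 : i ∈ S
      · have hterm : (permOf r S ⟨i, by omega⟩ : ℕ) = i - 1 ∧ 1 ≤ i := by
          rw [permOf_apply hr hS]
          exact pf_val2 hr hS (by simpa using h2)
        rw [if_pos h2] at hprev
        rw [hterm.1]
        have h1i := hterm.2
        push_cast [Nat.cast_sub h1i]
        push_cast [Nat.cast_sub h1i] at hprev ⊢
        omega
      · have hterm : permOf r S ⟨i, by omega⟩ = ⟨i, by omega⟩ := by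
          rw [permOf_apply hr hS]
          exact pf_val3 hr hS (by simpa using h1) (by simpa using h2)
        rw [if_neg h2] at hprev
        rw [hterm]
        omega

lemma forward {r : ℕ} {S : Finset ℕ} (hr : 1 ≤ r) (hS : goodS r S) :
    ∀ i, 1 ≤ i → i ≤ r → 0 ≤ Dfun r (permOf r S) i := by
  intro i h1 h2
  rw [Dfun, permOf_symm hr hS]
  have hsum := sum_permOf hr hS i h2
  -- σ ⟨r⟩ = ⟨r⟩
  have hfixr : (permOf r S ⟨r, by omega⟩ : ℕ) = r := by
    rw [permOf_apply hr hS, pf_val3 hr hS]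
    · intro h; have hb := goodS_bounds hS h; simp only [Fin.val_mk] at hb; omega
    · intro h; have hb := goodS_bounds hS h; simp only [Fin.val_mk] at hb; omega
  have hind2 : ¬ ((permOf r S ⟨r, by omega⟩ : ℕ) < i) := by omega
  rw [if_neg hind2]
  -- σ 0 value
  have h0 : (permOf r S ⟨0, by omega⟩ : ℕ) ≤ 1 := by
    rw [permOf_apply hr hS]
    by_cases hc : (0:ℕ) + 1 ∈ S
    · rw [pf_val1 hr hS (by simpa using hc)]
    · have hc2 : (0:ℕ) ∉ S := fun h => by have := goodS_bounds hS h; omega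
      rw [pf_val3 hr hS (by simpa using hc) (by simpa using hc2)]
      simp
  by_cases hiS : i ∈ S
  · rw [if_pos hiS] at hsum
    have hige : 2 ≤ i ∨ i = 1 := by omega
    rcases hige with hige | hieq
    · rw [if_pos (by omega)]
      omega
    · subst hieq
      rw [if_pos rfl]
      by_cases hlt : (permOf r S ⟨0, by omega⟩ : ℕ) < 1
      · rw [if_pos hlt]; omega
      · rw [if_neg hlt]; omega
  · rw [if_neg hiS] at hsum
    by_cases hlt : (permOf r S ⟨0, by omega⟩ : ℕ) < i
    · rw [if_pos hlt]
      by_cases hone : i = 1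
      · rw [if_pos hone]; omega
      · rw [if_neg hone]; omega
    · rw [if_neg hlt]
      by_cases hone : i = 1
      · rw [if_pos hone]; omega
      · rw [if_neg hone]; omega

----------------------------------------------------------------
-- converse direction
----------------------------------------------------------------

def Clean (r : ℕ) (σ : Equiv.Perm (Fin (r+1))) (i : ℕ) : Prop :=
  ∀ k ∈ Pfin r i, σ.symm k ∈ Pfin r i

def tval (r : ℕ) (σ : Equiv.Perm (Fin (r+1))) (k : ℕ) : ℕ :=
  (σ.symm ⟨k % (r+1), Nat.mod_lt _ (Nat.succ_pos r)⟩ : ℕ)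

section Converse

variable {r : ℕ} {σ : Equiv.Perm (Fin (r+1))}

lemma tval_eq {k : ℕ} (hk : k ≤ r) :
    tval r σ k = ((σ.symm ⟨k, by omega⟩ : Fin (r+1)) : ℕ) := by
  have h : (⟨k % (r+1), Nat.mod_lt _ (Nat.succ_pos r)⟩ : Fin (r+1)) = ⟨k, by omega⟩ :=
    Fin.ext (Nat.mod_eq_of_lt (by omega))
  rw [tval, h]

lemma tval_inj {a b : ℕ} (ha : a ≤ r) (hb : b ≤ r) (h : tval r σ a = tval r σ b) :
    a = b := by
  rw [tval_eq ha, tval_eq hb] at h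
  have := σ.symm.injective (Fin.ext h : σ.symm ⟨a, by omega⟩ = σ.symm ⟨b, by omega⟩)
  exact Fin.mk.inj_iff.mp this

lemma clean_image {i : ℕ} (hc : Clean r σ i) : (Pfin r i).image σ.symm = Pfin r i :=
  Finset.eq_of_subset_of_card_le (Finset.image_subset_iff.mpr hc)
    (by rw [Finset.card_image_of_injective _ σ.symm.injective])

lemma clean_sum {i : ℕ} (hc : Clean r σ i) :
    ∑ k ∈ Pfin r i, ((σ.symm k : ℕ) : ℤ) = ∑ k ∈ Pfin r i, ((k:ℕ):ℤ) := by
  conv_rhs => rw [← clean_image hc]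
  rw [Finset.sum_image (fun x _ y _ h => σ.symm.injective h)]

lemma clean_notMem {i : ℕ} (hc : Clean r σ i) {k : Fin (r+1)} (hk : k ∉ Pfin r i) :
    σ.symm k ∉ Pfin r i := by
  intro hmem
  rw [← clean_image hc] at hmem
  obtain ⟨x, hx, he⟩ := Finset.mem_image.mp hmem
  have : x = k := σ.symm.injective he
  exact hk (this ▸ hx)

lemma sigma_fix_iff {k : ℕ} (hk : k ≤ r) :
    (σ ⟨k, by omega⟩ : ℕ) = k ↔ tval r σ k = k := by
  rw [tval_eq hk]
  constructor
  · intro h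
    have : σ ⟨k, by omega⟩ = ⟨k, by omega⟩ := Fin.ext h
    rw [← this, Equiv.symm_apply_apply]
  · intro h
    have : σ.symm ⟨k, by omega⟩ = ⟨k, by omega⟩ := Fin.ext h
    conv_lhs => rw [← this, Equiv.apply_symm_apply]

lemma fixR (hr : 1 ≤ r) (hd : ∀ i, 1 ≤ i → i ≤ r → 0 ≤ Dfun r σ i) :
    tval r σ r = r := by
  by_contra hne
  have hd' := hd r hr le_rfl
  rw [Dfun] at hd'
  have hP : Pfin r r = Finset.univ.erase ⟨r, by omega⟩ := by
    ext k
    simp only [mem_Pfin, Finset.mem_erase, Finset.mem_univ, and_true, ne_eq,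
      Fin.ext_iff, Fin.val_mk]
    have := k.isLt
    omega
  have hs1 : ∑ k ∈ Pfin r r, ((k:ℕ):ℤ) = (∑ k : Fin (r+1), ((k:ℕ):ℤ)) - r := by
    rw [hP, Finset.sum_erase_eq_sub (Finset.mem_univ _)]
  have hs2 : ∑ k ∈ Pfin r r, ((σ.symm k:ℕ):ℤ)
      = (∑ k : Fin (r+1), ((k:ℕ):ℤ)) - ((tval r σ r : ℕ):ℤ) := by
    rw [hP, Finset.sum_erase_eq_sub (Finset.mem_univ _),
      Equiv.sum_comp σ.symm (fun k => ((k:ℕ):ℤ)), tval_eq le_rfl]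
  have hvlt : tval r σ r < r := by
    rw [tval_eq le_rfl]
    rw [tval_eq le_rfl] at hne
    have h1 : ((σ.symm ⟨r, by omega⟩ : Fin (r+1)) : ℕ) < r + 1 := (σ.symm _).isLt
    omega
  have hslt : (σ ⟨r, by omega⟩ : ℕ) < r := by
    have h2 : (σ ⟨r, by omega⟩ : ℕ) ≠ r := by
      intro h
      exact hne ((sigma_fix_iff le_rfl).mp h)
    have h1 : (σ ⟨r, by omega⟩ : ℕ) < r + 1 := (σ _).isLt
    omega
  rw [hs1, hs2, if_pos hslt] at hd'
  by_cases hr1 : r = 1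
  · subst hr1
    have hv0 : tval 1 σ 1 = 0 := by omega
    have hs0 : ¬ ((σ ⟨0, by omega⟩ : ℕ) < 1) := by
      have : σ ⟨0, by omega⟩ = ⟨1, by omega⟩ := by
        rw [tval_eq le_rfl] at hv0
        have : σ.symm ⟨1, by omega⟩ = ⟨0, by omega⟩ := Fin.ext hv0
        rw [← this, Equiv.apply_symm_apply]
      rw [this]
      simp
    rw [if_neg hs0, if_pos rfl] at hd'
    omega
  · rw [if_neg hr1] at hd'
    by_cases hs0 : (σ ⟨0, by omega⟩ : ℕ) < r
    · rw [if_pos hs0] at hd'; omega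
    · rw [if_neg hs0] at hd'; omega

lemma cond_ineq (hr : 1 ≤ r) (hd : ∀ i, 1 ≤ i → i ≤ r → 0 ≤ Dfun r σ i)
    (hfix : tval r σ r = r) {i : ℕ} (h1 : 1 ≤ i) (h2 : i ≤ r) :
    (∑ k ∈ Pfin r i, ((σ.symm k:ℕ):ℤ)) ≤ (∑ k ∈ Pfin r i, ((k:ℕ):ℤ))
      + (if (σ ⟨0, by omega⟩ : ℕ) < i then 1 else 0) + (if i = 1 then 1 else 0) := by
  have hd' := hd i h1 h2
  rw [Dfun] at hd'
  have hfix' : (σ ⟨r, by omega⟩ : ℕ) = r := (sigma_fix_iff le_rfl).mpr hfix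
  rw [if_neg (by omega : ¬ ((σ ⟨r, by omega⟩ : ℕ) < i))] at hd'
  by_cases hs0 : (σ ⟨0, by omega⟩ : ℕ) < i
  · rw [if_pos hs0] at hd' ⊢
    by_cases hi1 : i = 1
    · rw [if_pos hi1] at hd' ⊢; omega
    · rw [if_neg hi1] at hd' ⊢; omega
  · rw [if_neg hs0] at hd' ⊢
    by_cases hi1 : i = 1
    · rw [if_pos hi1] at hd' ⊢; omega
    · rw [if_neg hi1] at hd' ⊢; omega

lemma clean_zero : Clean r σ 0 := by
  intro k hk
  rw [Pfin_zero] at hk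
  exact absurd hk (Finset.notMem_empty _)


lemma Pfin_sum_succ (f : Fin (r+1) → ℤ) (i : ℕ) (h : i ≤ r) :
    ∑ k ∈ Pfin r (i+1), f k = ∑ k ∈ Pfin r i, f k + f ⟨i, by omega⟩ := by
  rw [Pfin_succ r i h, Finset.sum_insert (by rw [mem_Pfin]; simp)]
  ring

set_option maxHeartbeats 4000000 in
lemma step (hr : 1 ≤ r) (hd : ∀ i, 1 ≤ i → i ≤ r → 0 ≤ Dfun r σ i)
    (hfix : tval r σ r = r) {j : ℕ} (hj : j ≤ r) (hc : Clean r σ j) :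
    (tval r σ j = j ∧ Clean r σ (j+1)) ∨
    (j + 2 ≤ r ∧ tval r σ j = j + 1 ∧ tval r σ (j+1) = j ∧ Clean r σ (j+2)) := by
  by_cases hjr : j = r
  · subst hjr
    left
    refine ⟨hfix, ?_⟩
    intro k _
    rw [mem_Pfin]
    have := (σ.symm k).isLt
    omega
  have hjr' : j < r := lt_of_le_of_ne hj hjr
  have hnm : σ.symm ⟨j, by omega⟩ ∉ Pfin r j :=
    clean_notMem hc (by rw [mem_Pfin]; simp)
  have hge : j ≤ tval r σ j := by
    rw [mem_Pfin] at hnm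
    rw [tval_eq (show j ≤ r by omega)]
    exact Nat.le_of_not_lt hnm
  have hcond := cond_ineq hr hd hfix (i := j+1) (by omega) (by omega)
  rw [Pfin_succ r j (by omega),
    Finset.sum_insert (by rw [mem_Pfin]; simp),
    Finset.sum_insert (by rw [mem_Pfin]; simp), clean_sum hc,
    ← tval_eq (show j ≤ r by omega)] at hcond
  simp only [Fin.val_mk] at hcond
  by_cases hv : tval r σ j = j
  · left
    refine ⟨hv, ?_⟩
    intro k hk
    rw [Pfin_succ r j (by omega), Finset.mem_insert] at hk ⊢
    rcases hk with hk | hk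
    · subst hk
      left
      apply Fin.ext
      simp only [Fin.val_mk]
      rw [← tval_eq (show j ≤ r by omega)]
      exact hv
    · right; exact hc k hk
  · right
    have hveq : tval r σ j = j + 1 := by
      by_cases hj0 : j = 0
      · subst hj0
        have hs0 : ¬ ((σ ⟨0, by omega⟩ : ℕ) < 0 + 1) := by
          intro hlt
          apply hv
          have h0 : (σ ⟨0, by omega⟩ : ℕ) = 0 := by omega
          exact (sigma_fix_iff (by omega)).mp h0
        rw [if_neg hs0, if_pos rfl] at hcond
        omega
      · rw [if_neg (by omega : ¬ j + 1 = 1)] at hcond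
        by_cases hs0 : (σ ⟨0, by omega⟩ : ℕ) < j + 1
        · rw [if_pos hs0] at hcond; omega
        · rw [if_neg hs0] at hcond; omega
    have hj2 : j + 2 ≤ r := by
      have hle : tval r σ j ≤ r := by
        rw [tval_eq (show j ≤ r by omega)]
        have := (σ.symm (⟨j, by omega⟩ : Fin (r+1))).isLt
        omega
      have hner : tval r σ j ≠ r := by
        intro h
        have := tval_inj (show j ≤ r by omega) le_rfl (h.trans hfix.symm)
        omega
      omega
    have hnm2 : σ.symm ⟨j+1, by omega⟩ ∉ Pfin r j :=
      clean_notMem hc (by rw [mem_Pfin]; simp only [Fin.val_mk]; omega)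
    have hge2 : j ≤ tval r σ (j+1) := by
      rw [mem_Pfin] at hnm2
      rw [tval_eq (show j + 1 ≤ r by omega)]
      omega
    have hne2 : tval r σ (j+1) ≠ j + 1 := by
      intro h
      have := tval_inj (show j+1 ≤ r by omega) (show j ≤ r by omega) (h.trans hveq.symm)
      omega
    have h1nm : (⟨j+1, by omega⟩ : Fin (r+1)) ∉ insert (⟨j, by omega⟩ : Fin (r+1)) (Pfin r j) := by
      simp only [Finset.mem_insert, mem_Pfin, Fin.ext_iff, Fin.val_mk]
      omega
    have h0nm : (⟨j, by omega⟩ : Fin (r+1)) ∉ Pfin r j := by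
      rw [mem_Pfin]; simp
    have hler : j ≤ r := by omega
    have hle1r : j + 1 ≤ r := by omega
    have hcond2 := cond_ineq hr hd hfix (i := (j+1)+1) (by omega) (by omega)
    rw [Pfin_sum_succ (fun k => ((σ.symm k : ℕ) : ℤ)) (j+1) hle1r] at hcond2
    rw [Pfin_sum_succ (fun k => ((σ.symm k : ℕ) : ℤ)) j hler] at hcond2
    rw [Pfin_sum_succ (fun k => ((k : ℕ) : ℤ)) (j+1) hle1r] at hcond2
    rw [Pfin_sum_succ (fun k => ((k : ℕ) : ℤ)) j hler] at hcond2
    rw [clean_sum hc] at hcond2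
    rw [← tval_eq hler] at hcond2
    rw [← tval_eq hle1r] at hcond2
    simp only [Fin.val_mk] at hcond2
    have hval2 : tval r σ (j+1) = j := by
      rw [if_neg (by omega : ¬ (j + 1) + 1 = 1)] at hcond2
      by_cases hs0 : (σ ⟨0, by omega⟩ : ℕ) < (j + 1) + 1
      · rw [if_pos hs0] at hcond2; omega
      · rw [if_neg hs0] at hcond2; omega
    refine ⟨hj2, hveq, hval2, ?_⟩
    intro k hk
    rw [show j+2 = (j+1)+1 from rfl, Pfin_succ r (j+1) (by omega), Pfin_succ r j (by omega),
      Finset.mem_insert, Finset.mem_insert] at hk ⊢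
    rcases hk with hk | hk | hk
    · subst hk
      right; left
      apply Fin.ext
      simp only [Fin.val_mk]
      rw [← tval_eq (show j + 1 ≤ r by omega)]
      exact hval2
    · subst hk
      left
      apply Fin.ext
      simp only [Fin.val_mk]
      rw [← tval_eq (show j ≤ r by omega)]
      exact hveq
    · right; right; exact hc k hk

lemma trich_all (hr : 1 ≤ r) (hd : ∀ i, 1 ≤ i → i ≤ r → 0 ≤ Dfun r σ i)
    (hfix : tval r σ r = r) :
    ∀ m j, r + 1 ≤ j + m → Clean r σ j → ∀ k, j ≤ k → k ≤ r →
      tval r σ k = k ∨ (tval r σ k = k+1 ∧ k+1 ≤ r ∧ tval r σ (k+1) = k)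
        ∨ (1 ≤ k ∧ tval r σ k = k-1 ∧ tval r σ (k-1) = k) := by
  intro m
  induction m with
  | zero => intro j hm _ k hk1 hk2; omega
  | succ m ih =>
    intro j hm hc k hk1 hk2
    have hj : j ≤ r := le_trans hk1 hk2
    rcases step hr hd hfix hj hc with ⟨hv, hc1⟩ | ⟨hj2, hv1, hv2, hc2⟩
    · rcases Nat.eq_or_lt_of_le hk1 with he | hlt
      · left; rw [← he]; exact hv
      · exact ih (j+1) (by omega) hc1 k (by omega) hk2
    · rcases Nat.eq_or_lt_of_le hk1 with he | hlt
      · right; left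
        rw [← he]
        exact ⟨hv1, by omega, hv2⟩
      · rcases Nat.eq_or_lt_of_le (show j+1 ≤ k by omega) with he2 | hlt2
        · right; right
          rw [← he2]
          refine ⟨by omega, ?_, ?_⟩
          · simpa using hv2
          · simpa using hv1
        · exact ih (j+2) (by omega) hc2 k (by omega) hk2

lemma converse (hr : 1 ≤ r) (hd : ∀ i, 1 ≤ i → i ≤ r → 0 ≤ Dfun r σ i) :
    ∃ S, goodS r S ∧ σ = permOf r S := by
  classical
  have hfix := fixR hr hd
  have htr := trich_all hr hd hfix (r+1) 0 (by omega) clean_zero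
  set S : Finset ℕ := (Finset.Icc 1 (r-1)).filter (fun k => tval r σ (k-1) = k) with hSdef
  have hmemS : ∀ k, k ∈ S ↔ (1 ≤ k ∧ k ≤ r-1 ∧ tval r σ (k-1) = k) := by
    intro k
    rw [hSdef, Finset.mem_filter, Finset.mem_Icc]
    tauto
  have hgood : goodS r S := by
    constructor
    · rw [hSdef]; exact Finset.filter_subset _ _
    · intro k hk hk1
      rw [hmemS] at hk hk1
      obtain ⟨ha1, ha2, ha3⟩ := hk
      obtain ⟨hb1, hb2, hb3⟩ := hk1
      simp only [Nat.add_sub_cancel] at hb3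
      -- ha3 : tval (k-1) = k, hb3 : tval k = k + 1
      rcases htr (k-1) (by omega) (by omega) with h1 | ⟨h2a, h2b, h2c⟩ | ⟨h3a, h3b, h3c⟩
      · omega
      · rw [show k - 1 + 1 = k by omega] at h2c
        omega
      · omega
  have hperm : σ.symm = permOf r S := by
    apply Equiv.ext
    intro jf
    have hk : (jf : ℕ) ≤ r := by have := jf.isLt; omega
    have hval : ((σ.symm jf : Fin (r+1)) : ℕ) = tval r σ (jf : ℕ) := by
      rw [tval_eq hk]
    apply Fin.ext
    rw [permOf_apply hr hgood, hval]
    rcases htr (jf : ℕ) (by omega) hk with h1 | ⟨h2a, h2b, h2c⟩ | ⟨h3a, h3b, h3c⟩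
    · have hn1 : (jf : ℕ) + 1 ∉ S := by
        rw [hmemS]
        rintro ⟨_, _, hcon⟩
        simp only [Nat.add_sub_cancel] at hcon
        omega
      have hn2 : (jf : ℕ) ∉ S := by
        rw [hmemS]
        rintro ⟨hb1, _, hcon⟩
        have := tval_inj (show (jf:ℕ)-1 ≤ r by omega) hk (hcon.trans h1.symm)
        omega
      rw [pf_val3 hr hgood hn1 hn2, h1]
    · have hne : (jf : ℕ) + 1 ≠ r := by
        intro h
        have := tval_inj hk le_rfl ((h2a.trans h).trans hfix.symm)
        omega
      have hm1 : (jf : ℕ) + 1 ∈ S := by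
        rw [hmemS]
        refine ⟨by omega, by omega, ?_⟩
        simpa using h2a
      rw [pf_val1 hr hgood hm1, h2a]
    · have hne : (jf : ℕ) ≠ r := by
        intro h
        rw [h, hfix] at h3b
        omega
      have hm2 : (jf : ℕ) ∈ S := by
        rw [hmemS]
        exact ⟨h3a, by omega, h3c⟩
      rw [(pf_val2 hr hgood hm2).1, h3b]
  have hres : σ = (permOf r S).symm := by
    rw [← hperm]
    exact (Equiv.symm_symm σ).symm
  rw [permOf_symm hr hgood] at hres
  exact ⟨S, hgood, hres⟩

end Converse


/-- For the type `A_r` Weyl group (`r ≥ 1`), the Weyl alternation set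
`A(α̃, -α_1) = {σ : σ(α̃+ρ) + α_1 - ρ is a nonnegative integer combination of positive
roots}` has exactly `F_{r+1}` elements; equivalently, the number of subsets of
`{1, …, r-1}` with no two consecutive elements (i.e. of products of pairwise commuting
simple reflections from `{s_1, …, s_{r-1}}`, including the empty product) is `F_{r+1}`. -/
theorem card_alternation_set_neg_alpha_one (r : ℕ) (hr : 1 ≤ r) :
    Set.ncard {σ : Equiv.Perm (Fin (r + 1)) |
        IsNNPosComb r (permAct r σ (highestRoot r + rho r) + simpleRoot r 1 - rho r)}
      = Nat.fib (r + 1) ∧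
    (((Finset.Icc 1 (r - 1)).powerset).filter
        (fun S : Finset ℕ => ∀ k ∈ S, k + 1 ∉ S)).card = Nat.fib (r + 1) := by
  classical
  have hfib : (waSet (r-1)).card = Nat.fib (r + 1) := by
    have h := waSet_card (r-1)
    rw [show r - 1 + 2 = r + 1 by omega] at h
    exact h
  refine ⟨?_, hfib⟩
  have hset : {σ : Equiv.Perm (Fin (r + 1)) |
      IsNNPosComb r (permAct r σ (highestRoot r + rho r) + simpleRoot r 1 - rho r)}
      = ↑((waSet (r-1)).image (permOf r)) := by
    ext σ
    simp only [Set.mem_setOf_eq, Finset.coe_image, Set.mem_image, Finset.mem_coe]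
    rw [mem_iff r hr σ]
    constructor
    · intro hd
      obtain ⟨S, hgood, he⟩ := converse hr hd
      refine ⟨S, ?_, he.symm⟩
      rw [mem_waSet]
      exact hgood
    · rintro ⟨S, hS, rfl⟩
      have hgood : goodS r S := mem_waSet.mp hS
      exact forward hr hgood
  rw [hset, Set.ncard_coe_finset, Finset.card_image_of_injOn, hfib]
  intro S hS T hT h
  exact permOf_injOn hr (mem_waSet.mp hS) (mem_waSet.mp hT) h
end
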